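/- Let r > 0, v > 0, Γ > 0, Δ > 0, η ∈ (0,1), and 0 ≤ ℓ < h be real numbers. For k ∈ {ℓ, h} define π_k(q) = q·((1−η)·𝓛(k) − η·𝓐(k)) − η·Γ·(1 − √(1+k)·(1+r)/Δ), where 𝓛(f) = v·f·(1+r)·(2Δ − (r+2)·√(1+f))/Δ and 𝓐(f) = v·((Δ − √(1+f)·(1+r))·(Δ² + Δ·√(1+f)·(1+r) + (1+f)·(r−2)·(r+1)) + (1+f)^{3/2}·r²·(r+1))/(3Δ). If q > 0 satisfies π_ℓ(q) ≥ π_h(q), then every q̃ > q satisfies π_ℓ(q̃) > π_h(q̃); that is, if a liquidity provider of size q weakly prefers the low-fee pool, then every strictly larger liquidity provider strictly prefers the low-fee pool. -/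
import Mathlib


/-- The liquidity yield `𝓛`. -/
noncomputable def liqYield (v r Δ f : ℝ) : ℝ :=
  v * f * (1 + r) * (2 * Δ - (r + 2) * Real.sqrt (1 + f)) / Δ

/-- The adverse selection cost `𝓐`. -/
noncomputable def advSel (v r Δ f : ℝ) : ℝ :=
  v * ((Δ - Real.sqrt (1 + f) * (1 + r)) *
        (Δ ^ 2 + Δ * Real.sqrt (1 + f) * (1 + r) + (1 + f) * (r - 2) * (r + 1)) +
      (1 + f) ^ ((3 : ℝ) / 2) * r ^ 2 * (r + 1)) / (3 * Δ)

/-- Expected profit of a liquidity provider with endowment `q` on the pool with fee `k`. -/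
noncomputable def lpProfit (v r Δ Γ η k q : ℝ) : ℝ :=
  q * ((1 - η) * liqYield v r Δ k - η * advSel v r Δ k) -
    η * Γ * (1 - Real.sqrt (1 + k) * (1 + r) / Δ)

/-- Single crossing (economies of scale): if a liquidity provider of size `q > 0` weakly
prefers the low-fee pool (`π_ℓ(q) ≥ π_h(q)`), then every strictly larger liquidity
provider strictly prefers the low-fee pool. -/
theorem single_crossing_pool_preference
    (r v Γ Δ η ℓ h : ℝ) (hr : 0 < r) (hv : 0 < v) (hΓ : 0 < Γ) (hΔ : 0 < Δ)
    (hη : η ∈ Set.Ioo (0 : ℝ) 1) (hℓ : 0 ≤ ℓ) (hℓh : ℓ < h)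
    (q : ℝ) (hq : 0 < q)
    (hpref : lpProfit v r Δ Γ η h q ≤ lpProfit v r Δ Γ η ℓ q) :
    ∀ q' : ℝ, q < q' → lpProfit v r Δ Γ η h q' < lpProfit v r Δ Γ η ℓ q' := by
  intro q' hq'
  set s : ℝ := ((1 - η) * liqYield v r Δ ℓ - η * advSel v r Δ ℓ) -
      ((1 - η) * liqYield v r Δ h - η * advSel v r Δ h) with hs
  set c : ℝ := η * Γ * (1 + r) / Δ * (Real.sqrt (1 + ℓ) - Real.sqrt (1 + h)) with hc
  have hdiff : ∀ x : ℝ, lpProfit v r Δ Γ η ℓ x - lpProfit v r Δ Γ η h x = x * s + c := by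
    intro x
    simp only [lpProfit, hs, hc]
    ring
  have hsqrt : Real.sqrt (1 + ℓ) < Real.sqrt (1 + h) :=
    Real.sqrt_lt_sqrt (by linarith) (by linarith)
  have hcneg : c < 0 := by
    have hη0 : 0 < η := hη.1
    have h1 : 0 < η * Γ * (1 + r) / Δ := by positivity
    have := mul_neg_of_pos_of_neg h1 (by linarith : Real.sqrt (1 + ℓ) - Real.sqrt (1 + h) < 0)
    simpa [hc] using this
  have hD : 0 ≤ q * s + c := by
    have := hdiff q; linarith [hpref]
  have hspos : 0 < s := by
    by_contra hns
    push_neg at hns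
    nlinarith
  have : 0 < q' * s + c := by nlinarith
  have := hdiff q'
  linarith
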